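/- Let X be a Banach space, ρ = (ρ_j)_{j≥1} a sequence with ρ_j > 1 for all j, and y ∈ Y. For v = (v_ν)_{ν∈F} ∈ ℓ_1(F, X) define (T_{ρ,y} v)_ν := (ρ − |y|)^ν Σ_{μ≥ν} v_μ · (μ!/((μ−ν)! ν!)) · ρ^{−μ} y^{μ−ν}. Then, with no summability assumption on the sequence (|y_j|/ρ_j)_{j≥1}, one has Σ_{ν∈F} ‖(T_{ρ,y} v)_ν‖_X ≤ Σ_{μ∈F} ‖v_μ‖_X, i.e. ‖T_{ρ,y}‖_{ℓ_1(F,X)→ℓ_1(F,X)} ≤ 1. -/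

import Mathlib

open scoped BigOperators ENNReal

noncomputable section

/-- The set `F` of finitely supported multi-indices. -/
abbrev MIdx : Type := ℕ →₀ ℕ

/-- `ρ^ν := ∏_j ρ_j^{ν_j}` for a finitely supported multi-index `ν`. -/
def mpow (ρ : ℕ → ℝ) (ν : MIdx) : ℝ := ν.prod fun j k => ρ j ^ k

/-- `μ!/((μ-ν)!ν!) = ∏_j C(μ_j, ν_j)` (meaningful for `ν ≤ μ`). -/
def mchoose (μ ν : MIdx) : ℕ := μ.prod fun j k => k.choose (ν j)

/-!
Put `a_j := ρ_j - |y_j| > 0`, so that `a_j + |y_j| = ρ_j`. By the multivariate binomial theorem the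
weights `a^ν (μ choose ν) |y|^(μ-ν) ρ^(-μ)`, `ν ≤ μ`, sum to `1` over `ν` for every fixed `μ`; in
particular each is at most `1`, which bounds the coefficients of the series for `(T v)_ν` by `a^(-ν)`
and gives its absolute convergence. Since `‖(T v)_ν‖` is at most the weighted sum of the `‖v_μ‖`,
summing over `ν` and exchanging the two sums in `ℝ≥0∞` gives the bound.
-/

theorem Finset.sum_finsupp_prod_eq_prod_sum {ι α R : Type*} [Zero α] [CommSemiring R]
    (s : Finset ι) (t : ι → Finset α) (g : ι → α → R) :
    ∑ f ∈ s.finsupp t, ∏ i ∈ s, g i (f i) = ∏ i ∈ s, ∑ a ∈ t i, g i a := by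
  classical
  rw [Finset.prod_sum, Finset.finsupp, Finset.sum_map]
  refine Finset.sum_congr rfl fun p _ => ?_
  rw [← Finset.prod_attach]
  exact Finset.prod_congr rfl fun i _ => by simp [Finsupp.indicator_of_mem i.2]

theorem Finsupp.Iic_eq_finsupp {ι : Type*} [DecidableEq ι] (μ : ι →₀ ℕ) :
    Finset.Iic μ = μ.support.finsupp fun j => Finset.Iic (μ j) := by
  rw [← Finset.Icc_bot, Finsupp.Icc_eq, bot_eq_zero, Finsupp.support_zero, Finset.empty_union]
  rfl

open Finset

lemma mpow_eq_prod_of_support_subset {f : ℕ → ℝ} {ν : MIdx} {s : Finset ℕ} (h : ν.support ⊆ s) :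
    mpow f ν = ∏ j ∈ s, f j ^ ν j :=
  Finsupp.prod_of_support_subset ν h _ fun _ _ => pow_zero _

lemma mpow_nonneg {f : ℕ → ℝ} (hf : ∀ j, 0 ≤ f j) (ν : MIdx) : 0 ≤ mpow f ν :=
  prod_nonneg fun j _ => pow_nonneg (hf j) _

lemma mpow_pos {f : ℕ → ℝ} (hf : ∀ j, 0 < f j) (ν : MIdx) : 0 < mpow f ν :=
  prod_pos fun j _ => pow_pos (hf j) _

lemma mpow_ne_zero {f : ℕ → ℝ} (hf : ∀ j, f j ≠ 0) (ν : MIdx) : mpow f ν ≠ 0 :=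
  prod_ne_zero_iff.2 fun j _ => pow_ne_zero _ (hf j)

lemma abs_mpow (f : ℕ → ℝ) (ν : MIdx) : |mpow f ν| = mpow (fun j => |f j|) ν := by
  simp only [mpow, Finsupp.prod, abs_prod, abs_pow]

lemma cast_mchoose (μ ν : MIdx) :
    (mchoose μ ν : ℝ) = ∏ j ∈ μ.support, ((μ j).choose (ν j) : ℝ) := by
  simp [mchoose, Finsupp.prod]

theorem sum_Iic_mpow_mul_mchoose_mul_mpow (f g : ℕ → ℝ) (μ : MIdx) :
    ∑ ν ∈ Iic μ, mpow f ν * mchoose μ ν * mpow g (μ - ν) = mpow (f + g) μ := by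
  have hterm : ∀ ν ∈ Iic μ, mpow f ν * mchoose μ ν * mpow g (μ - ν) =
      ∏ j ∈ μ.support, f j ^ ν j * (μ j).choose (ν j) * g j ^ (μ j - ν j) := by
    intro ν hν
    have hνμ : ν ≤ μ := mem_Iic.1 hν
    rw [mpow_eq_prod_of_support_subset (Finsupp.support_mono hνμ),
      mpow_eq_prod_of_support_subset (Finsupp.support_mono (tsub_le_self : μ - ν ≤ μ)),
      cast_mchoose, ← prod_mul_distrib, ← prod_mul_distrib]
    rfl
  rw [sum_congr rfl hterm, Finsupp.Iic_eq_finsupp,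
    sum_finsupp_prod_eq_prod_sum _ _ fun j k => f j ^ k * (μ j).choose k * g j ^ (μ j - k),
    mpow_eq_prod_of_support_subset subset_rfl]
  refine prod_congr rfl fun j _ => ?_
  rw [Pi.add_apply, add_pow, ← Nat.range_succ_eq_Iic]
  exact sum_congr rfl fun k _ => by ring

theorem tsum_le_tsum_of_column_sum_le_one {α β : Type*} {f : α → ℝ≥0∞} {g : β → ℝ≥0∞}
    (K : α → β → ℝ≥0∞) (hf : ∀ a, f a ≤ ∑' b, K a b * g b) (hK : ∀ b, ∑' a, K a b ≤ 1) :
    ∑' a, f a ≤ ∑' b, g b :=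
  calc ∑' a, f a ≤ ∑' a, ∑' b, K a b * g b := ENNReal.tsum_le_tsum hf
    _ = ∑' b, (∑' a, K a b) * g b := by rw [ENNReal.tsum_comm]; simp_rw [ENNReal.tsum_mul_right]
    _ ≤ ∑' b, g b := ENNReal.tsum_le_tsum fun b => mul_le_of_le_one_left' (hK b)

theorem enorm_smul_tsum_smul_le {ι 𝕜 X : Type*} [NormedField 𝕜] [NormedAddCommGroup X]
    [NormedSpace 𝕜 X] (r : 𝕜) (c : ι → 𝕜) (v : ι → X) :
    ‖r • ∑' i, c i • v i‖ₑ ≤ ∑' i, ‖r * c i‖ₑ * ‖v i‖ₑ :=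
  calc ‖r • ∑' i, c i • v i‖ₑ ≤ ‖r‖ₑ * ∑' i, ‖c i • v i‖ₑ := by
        rw [enorm_smul]; exact mul_le_mul_right enorm_tsum_le_tsum_enorm _
    _ = ∑' i, ‖r * c i‖ₑ * ‖v i‖ₑ := by
        rw [← ENNReal.tsum_mul_left]; simp_rw [enorm_smul, enorm_mul, mul_assoc]

def shiftCoeff (ρ y : ℕ → ℝ) (ν μ : MIdx) : ℝ := mchoose μ ν * (mpow ρ μ)⁻¹ * mpow y (μ - ν)

section shiftCoeff

variable {ρ b : ℕ → ℝ}

lemma shiftCoeff_nonneg (hρ : ∀ j, 0 ≤ ρ j) (hb : ∀ j, 0 ≤ b j) (ν μ : MIdx) :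
    0 ≤ shiftCoeff ρ b ν μ := by
  have hρμ := mpow_nonneg hρ μ
  have hbμν := mpow_nonneg hb (μ - ν)
  unfold shiftCoeff
  positivity

lemma abs_shiftCoeff (hρ : ∀ j, 0 ≤ ρ j) (y : ℕ → ℝ) (ν μ : MIdx) :
    |shiftCoeff ρ y ν μ| = shiftCoeff ρ (fun j => |y j|) ν μ := by
  rw [shiftCoeff, shiftCoeff, abs_mul, abs_mul, abs_mpow, Nat.abs_cast,
    abs_of_nonneg (inv_nonneg.2 (mpow_nonneg hρ μ))]

theorem sum_Iic_mpow_sub_mul_shiftCoeff (hρ : ∀ j, ρ j ≠ 0) (b : ℕ → ℝ) (μ : MIdx) :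
    ∑ ν ∈ Iic μ, mpow (fun j => ρ j - b j) ν * shiftCoeff ρ b ν μ = 1 := by
  have hbinom := sum_Iic_mpow_mul_mchoose_mul_mpow (fun j => ρ j - b j) b μ
  rw [show (fun j => ρ j - b j) + b = ρ from funext fun j => sub_add_cancel _ _] at hbinom
  calc ∑ ν ∈ Iic μ, mpow (fun j => ρ j - b j) ν * shiftCoeff ρ b ν μ
      = (∑ ν ∈ Iic μ, mpow (fun j => ρ j - b j) ν * mchoose μ ν * mpow b (μ - ν)) *
          (mpow ρ μ)⁻¹ := by
        rw [sum_mul]; exact sum_congr rfl fun ν _ => by rw [shiftCoeff]; ring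
    _ = 1 := by rw [hbinom, mul_inv_cancel₀ (mpow_ne_zero hρ μ)]

lemma mpow_sub_mul_shiftCoeff_le_one (hb : ∀ j, 0 ≤ b j) (hbρ : ∀ j, b j < ρ j) {ν μ : MIdx}
    (hνμ : ν ≤ μ) : mpow (fun j => ρ j - b j) ν * shiftCoeff ρ b ν μ ≤ 1 := by
  have hρ : ∀ j, 0 < ρ j := fun j => (hb j).trans_lt (hbρ j)
  rw [← sum_Iic_mpow_sub_mul_shiftCoeff (fun j => (hρ j).ne') b μ]
  refine single_le_sum (f := fun ν => mpow (fun j => ρ j - b j) ν * shiftCoeff ρ b ν μ)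
    (fun ν _ => mul_nonneg ?_ ?_) (mem_Iic.2 hνμ)
  · exact mpow_nonneg (fun j => (sub_pos.2 (hbρ j)).le) ν
  · exact shiftCoeff_nonneg (fun j => (hρ j).le) hb ν μ

end shiftCoeff

def shiftKernel (ρ y : ℕ → ℝ) (ν μ : MIdx) : ℝ≥0∞ :=
  {μ | ν ≤ μ}.indicator (fun μ => ‖mpow (fun j => ρ j - |y j|) ν * shiftCoeff ρ y ν μ‖ₑ) μ

section shiftKernel

variable {ρ y : ℕ → ℝ}

theorem tsum_shiftKernel_eq_one (hyρ : ∀ j, |y j| < ρ j) (μ : MIdx) :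
    ∑' ν, shiftKernel ρ y ν μ = 1 := by
  have hρ : ∀ j, 0 < ρ j := fun j => (abs_nonneg _).trans_lt (hyρ j)
  have ha : ∀ ν, 0 < mpow (fun j => ρ j - |y j|) ν := mpow_pos fun j => sub_pos.2 (hyρ j)
  have hsupp : ∀ ν ∉ Iic μ, shiftKernel ρ y ν μ = 0 := fun ν hν =>
    Set.indicator_of_notMem (mt mem_Iic.2 hν) _
  calc ∑' ν, shiftKernel ρ y ν μ
      = ∑ ν ∈ Iic μ, ENNReal.ofReal
          (mpow (fun j => ρ j - |y j|) ν * shiftCoeff ρ (fun j => |y j|) ν μ) := by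
        rw [tsum_eq_sum hsupp]
        refine sum_congr rfl fun ν hν => ?_
        rw [shiftKernel, Set.indicator_of_mem (s := {μ | ν ≤ μ}) (mem_Iic.1 hν), ← ofReal_norm,
          norm_mul, Real.norm_eq_abs, Real.norm_eq_abs, abs_of_pos (ha ν),
          abs_shiftCoeff fun j => (hρ j).le]
    _ = 1 := by
        rw [← ENNReal.ofReal_sum_of_nonneg, sum_Iic_mpow_sub_mul_shiftCoeff (fun j => (hρ j).ne'),
          ENNReal.ofReal_one]
        exact fun ν _ => mul_nonneg (ha ν).le
          (shiftCoeff_nonneg (fun j => (hρ j).le) (fun j => abs_nonneg _) ν μ)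

theorem enorm_smul_tsum_le_tsum_shiftKernel_mul {X : Type*} [NormedAddCommGroup X]
    [NormedSpace ℝ X] (v : MIdx → X) (ν : MIdx) :
    ‖mpow (fun j => ρ j - |y j|) ν • ∑' μ : {μ : MIdx // ν ≤ μ}, shiftCoeff ρ y ν μ • v μ‖ₑ ≤
      ∑' μ, shiftKernel ρ y ν μ * ‖v μ‖ₑ :=
  (enorm_smul_tsum_smul_le _ _ _).trans_eq <|
    (tsum_subtype {μ | ν ≤ μ} fun μ =>
      ‖mpow (fun j => ρ j - |y j|) ν * shiftCoeff ρ y ν μ‖ₑ * ‖v μ‖ₑ).trans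
      (tsum_congr fun _ => Set.indicator_mul_left _ _ _)

theorem summable_norm_shiftCoeff_smul {X : Type*} [NormedAddCommGroup X] [NormedSpace ℝ X]
    (hyρ : ∀ j, |y j| < ρ j) {v : MIdx → X} (hv : Summable fun μ => ‖v μ‖) (ν : MIdx) :
    Summable fun μ : {μ : MIdx // ν ≤ μ} => ‖shiftCoeff ρ y ν μ • v μ‖ := by
  have hρ : ∀ j, 0 ≤ ρ j := fun j => ((abs_nonneg _).trans_lt (hyρ j)).le
  have ha : 0 < mpow (fun j => ρ j - |y j|) ν := mpow_pos (fun j => sub_pos.2 (hyρ j)) ν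
  refine ((hv.subtype {μ | ν ≤ μ}).mul_left (mpow (fun j => ρ j - |y j|) ν)⁻¹).of_nonneg_of_le
    (fun _ => norm_nonneg _) fun μ => ?_
  have hcoeff : |shiftCoeff ρ y ν μ| ≤ (mpow (fun j => ρ j - |y j|) ν)⁻¹ := by
    rw [← one_div, le_div_iff₀' ha, abs_shiftCoeff hρ]
    exact mpow_sub_mul_shiftCoeff_le_one (fun j => abs_nonneg _) hyρ μ.2
  rw [norm_smul, Real.norm_eq_abs]
  exact mul_le_mul_of_nonneg_right hcoeff (norm_nonneg _)

end shiftKernel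

theorem operator_l1_bound_general
    {X : Type*} [NormedAddCommGroup X] [NormedSpace ℝ X]
    (ρ : ℕ → ℝ) (hρ : ∀ j, 1 < ρ j)
    (y : ℕ → ℝ) (hy : ∀ j, |y j| ≤ 1)
    (v : MIdx → X) (hv : Summable fun μ : MIdx => ‖v μ‖)
    (T : MIdx → X)
    (hT : ∀ ν : MIdx, T ν = mpow (fun j => ρ j - |y j|) ν •
      ∑' μ : {μ : MIdx // ν ≤ μ},
        ((mchoose μ.1 ν : ℝ) * (mpow ρ μ.1)⁻¹ * mpow y (μ.1 - ν)) • v μ.1) :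
    (∀ ν : MIdx, Summable fun μ : {μ : MIdx // ν ≤ μ} =>
      ‖((mchoose μ.1 ν : ℝ) * (mpow ρ μ.1)⁻¹ * mpow y (μ.1 - ν)) • v μ.1‖) ∧
    ∑' ν : MIdx, ENNReal.ofReal ‖T ν‖ ≤ ∑' μ : MIdx, ENNReal.ofReal ‖v μ‖ := by
  have hyρ : ∀ j, |y j| < ρ j := fun j => (hy j).trans_lt (hρ j)
  refine ⟨summable_norm_shiftCoeff_smul hyρ hv, ?_⟩
  simp only [ofReal_norm]
  refine tsum_le_tsum_of_column_sum_le_one (shiftKernel ρ y) (fun ν => ?_)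
    fun μ => (tsum_shiftKernel_eq_one hyρ μ).le
  rw [hT ν]
  exact enorm_smul_tsum_le_tsum_shiftKernel_mul v ν

/-- The operator `T_{ρ,y}` has `ℓ_1(F,X) → ℓ_1(F,X)` norm at most `1`,
with no summability assumption on `(|y_j|/ρ_j)_j`:
`Σ_ν ‖(T_{ρ,y} v)_ν‖ ≤ Σ_μ ‖v_μ‖`. The sums on both sides are taken in `ℝ≥0∞`;
the first conjunct asserts the absolute convergence of the series defining `T_{ρ,y} v`. -/
theorem operator_l1_bound
    {X : Type*} [NormedAddCommGroup X] [NormedSpace ℝ X] [CompleteSpace X]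
    (ρ : ℕ → ℝ) (hρ : ∀ j, 1 < ρ j)
    (y : ℕ → ℝ) (hy : ∀ j, |y j| ≤ 1)
    (v : MIdx → X) (hv : Summable fun μ : MIdx => ‖v μ‖)
    (T : MIdx → X)
    (hT : ∀ ν : MIdx, T ν = mpow (fun j => ρ j - |y j|) ν •
      ∑' μ : {μ : MIdx // ν ≤ μ},
        ((mchoose μ.1 ν : ℝ) * (mpow ρ μ.1)⁻¹ * mpow y (μ.1 - ν)) • v μ.1) :
    (∀ ν : MIdx, Summable fun μ : {μ : MIdx // ν ≤ μ} =>
      ‖((mchoose μ.1 ν : ℝ) * (mpow ρ μ.1)⁻¹ * mpow y (μ.1 - ν)) • v μ.1‖) ∧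
    ∑' ν : MIdx, ENNReal.ofReal ‖T ν‖ ≤ ∑' μ : MIdx, ENNReal.ofReal ‖v μ‖ :=
  operator_l1_bound_general ρ hρ y hy v hv T hT
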